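/- Let Φ be continuous monotone increasing on I with Φ(I) = 𝓘, and let Ψ be monotone increasing on 𝓘 with bounded integrable density ψ ≥ 0 (i.e., Ψ(y₂)−Ψ(y₁)=∫_{y₁}^{y₂}ψ). Let f be bounded on 𝓘 with |f| ≤ M_f. If both (f∘Φ)(ψ∘Φ) is Darboux–Stieltjes integrable with respect to Φ and ψ is Riemann integrable, then f∘Φ is Darboux–Stieltjes integrable with respect to Ψ∘Φ on I and ∫_I (f∘Φ) d(Ψ∘Φ) = ∫_I (f∘Φ)(ψ∘Φ) dΦ. -/

import Mathlib

open Set Filter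

/-- `p 0, p 1, …, p n` is a partition of `[a,b]`. -/
def IsPartition (a b : ℝ) (n : ℕ) (p : ℕ → ℝ) : Prop :=
  p 0 = a ∧ p n = b ∧ ∀ i < n, p i ≤ p (i + 1)

/-- Upper Darboux–Stieltjes sum of `f` with respect to the integrator `G` along a partition. -/
noncomputable def upperSum (f G : ℝ → ℝ) (n : ℕ) (p : ℕ → ℝ) : ℝ :=
  ∑ i ∈ Finset.range n, sSup (f '' Set.Icc (p i) (p (i + 1))) * (G (p (i + 1)) - G (p i))

/-- Lower Darboux–Stieltjes sum. -/
noncomputable def lowerSum (f G : ℝ → ℝ) (n : ℕ) (p : ℕ → ℝ) : ℝ :=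
  ∑ i ∈ Finset.range n, sInf (f '' Set.Icc (p i) (p (i + 1))) * (G (p (i + 1)) - G (p i))

def upperSums (f G : ℝ → ℝ) (a b : ℝ) : Set ℝ :=
  {s | ∃ n p, IsPartition a b n p ∧ s = upperSum f G n p}

def lowerSums (f G : ℝ → ℝ) (a b : ℝ) : Set ℝ :=
  {s | ∃ n p, IsPartition a b n p ∧ s = lowerSum f G n p}

/-- Darboux–Stieltjes integrability of `f` with respect to `G` on `[a,b]`. -/
def DSIntegrable (f G : ℝ → ℝ) (a b : ℝ) : Prop :=
  sInf (upperSums f G a b) = sSup (lowerSums f G a b)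

/-- The Darboux–Stieltjes integral (the infimum of upper sums). -/
noncomputable def DSIntegral (f G : ℝ → ℝ) (a b : ℝ) : ℝ :=
  sInf (upperSums f G a b)

/-- Oriented Darboux–Stieltjes integrability on the interval from `a` to `b`. -/
def oDSIntegrable (f G : ℝ → ℝ) (a b : ℝ) : Prop :=
  DSIntegrable f G (min a b) (max a b)

/-- Oriented Darboux–Stieltjes integral on the interval from `a` to `b`. -/
noncomputable def oDSIntegral (f G : ℝ → ℝ) (a b : ℝ) : ℝ :=
  if a ≤ b then DSIntegral f G a b else -DSIntegral f G b a

/-- `f` is bounded on `s`. -/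
def BddOn (f : ℝ → ℝ) (s : Set ℝ) : Prop := ∃ M, ∀ x ∈ s, |f x| ≤ M

/-- The oscillation of `f` on a set. -/
noncomputable def osc (f : ℝ → ℝ) (s : Set ℝ) : ℝ := sSup (f '' s) - sInf (f '' s)

/-- `v` is the Riemann–Stieltjes integral of `f` with respect to `G` on `[a,b]`,
as a limit of Riemann–Stieltjes sums as the mesh of tagged partitions tends to `0`. -/
def RSIntegralTo (f G : ℝ → ℝ) (a b v : ℝ) : Prop :=
  ∀ ε > 0, ∃ δ > 0, ∀ (n : ℕ) (p t : ℕ → ℝ), IsPartition a b n p →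
    (∀ i < n, p (i + 1) - p i < δ) → (∀ i < n, t i ∈ Set.Icc (p i) (p (i + 1))) →
    |(∑ i ∈ Finset.range n, f (t i) * (G (p (i + 1)) - G (p i))) - v| < ε

/-- Riemann–Stieltjes integrability. -/
def RSIntegrable (f G : ℝ → ℝ) (a b : ℝ) : Prop := ∃ v, RSIntegralTo f G a b v

/-!
Since `Φ` is continuous and monotone, it maps each `[x₁, x₂] ⊆ [a, b]` onto `[Φ x₁, Φ x₂]`, so
the Darboux sums of `f ∘ Φ` against `Ψ ∘ Φ` are those of `f` against `Ψ` along the image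
partition. On a cell `[y₁, y₂]`, `Ψ y₂ - Ψ y₁ = ∫ ψ` is within `osc ψ · (y₂ - y₁)` of
`ψ y · (y₂ - y₁)` for every `y` in the cell, hence `sup f · (Ψ y₂ - Ψ y₁)` exceeds
`sup (f ψ) · (y₂ - y₁)` by at most `M_f · osc ψ · (y₂ - y₁)`, and symmetrically for infima.
A partition of `[a, b]` whose sums for `(f ∘ Φ)(ψ ∘ Φ)` are close to its integral, and whose
image refines a partition with small oscillation sum for `ψ` (pull its points back through the
surjection `Φ`), then squeezes the sums of `f ∘ Φ` against `Ψ ∘ Φ` around that integral.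
-/

theorem BddOn.mono {h : ℝ → ℝ} {s t : Set ℝ} (hh : BddOn h t) (hst : s ⊆ t) : BddOn h s :=
  let ⟨M, hM⟩ := hh; ⟨M, fun x hx => hM x (hst hx)⟩

theorem BddOn.neg {h : ℝ → ℝ} {s : Set ℝ} (hh : BddOn h s) : BddOn (fun x => -h x) s :=
  let ⟨M, hM⟩ := hh; ⟨M, fun x hx => (abs_neg (h x)).trans_le (hM x hx)⟩

theorem BddOn.mul {h k : ℝ → ℝ} {s : Set ℝ} (hh : BddOn h s) (hk : BddOn k s) :
    BddOn (fun x => h x * k x) s :=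
  let ⟨M, hM⟩ := hh
  let ⟨K, hK⟩ := hk
  ⟨M * K, fun x hx => (abs_mul _ _).trans_le <|
    mul_le_mul (hM x hx) (hK x hx) (abs_nonneg _) ((abs_nonneg _).trans (hM x hx))⟩

theorem BddOn.comp {h Φ : ℝ → ℝ} {s t : Set ℝ} (hh : BddOn h t) (hΦ : MapsTo Φ s t) :
    BddOn (h ∘ Φ) s :=
  let ⟨M, hM⟩ := hh; ⟨M, fun x hx => hM (Φ x) (hΦ hx)⟩

theorem BddOn.bddAbove_image {h : ℝ → ℝ} {s : Set ℝ} (hh : BddOn h s) : BddAbove (h '' s) :=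
  let ⟨M, hM⟩ := hh; ⟨M, by rintro _ ⟨x, hx, rfl⟩; exact (abs_le.1 (hM x hx)).2⟩

theorem BddOn.bddBelow_image {h : ℝ → ℝ} {s : Set ℝ} (hh : BddOn h s) : BddBelow (h '' s) :=
  let ⟨M, hM⟩ := hh; ⟨-M, by rintro _ ⟨x, hx, rfl⟩; exact (abs_le.1 (hM x hx)).1⟩

namespace IsPartition

variable {a b : ℝ} {n : ℕ} {p : ℕ → ℝ}

theorem le_of_le (hp : IsPartition a b n p) {i j : ℕ} (hij : i ≤ j) (hj : j ≤ n) : p i ≤ p j := by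
  induction j, hij using Nat.le_induction with
  | base => exact le_rfl
  | succ j _ ih => exact (ih (by omega)).trans (hp.2.2 j (by omega))

theorem mem_Icc (hp : IsPartition a b n p) {i : ℕ} (hi : i ≤ n) : p i ∈ Icc a b :=
  ⟨hp.1 ▸ hp.le_of_le i.zero_le hi, hp.2.1 ▸ hp.le_of_le hi le_rfl⟩

theorem left_le_right (hp : IsPartition a b n p) : a ≤ b :=
  hp.1 ▸ hp.2.1 ▸ hp.le_of_le n.zero_le le_rfl

theorem Icc_subset (hp : IsPartition a b n p) {i : ℕ} (hi : i < n) :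
    Icc (p i) (p (i + 1)) ⊆ Icc a b :=
  Icc_subset_Icc (hp.mem_Icc hi.le).1 (hp.mem_Icc hi).2

theorem sub_nonneg_of_monotoneOn (hp : IsPartition a b n p) {G : ℝ → ℝ}
    (hG : MonotoneOn G (Icc a b)) {i : ℕ} (hi : i < n) : 0 ≤ G (p (i + 1)) - G (p i) :=
  sub_nonneg.2 (hG (hp.mem_Icc hi.le) (hp.mem_Icc hi) (hp.2.2 i hi))

theorem take {k l : ℕ} (hp : IsPartition a b (k + l) p) : IsPartition a (p k) k p :=
  ⟨hp.1, rfl, fun i hi => hp.2.2 i (by omega)⟩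

theorem drop {k l : ℕ} (hp : IsPartition a b (k + l) p) :
    IsPartition (p k) b l (fun i => p (k + i)) :=
  ⟨rfl, hp.2.1, fun i hi => hp.2.2 (k + i) (by omega)⟩

theorem comp (hp : IsPartition a b n p) {Φ : ℝ → ℝ} (hΦ : MonotoneOn Φ (Icc a b)) :
    IsPartition (Φ a) (Φ b) n (Φ ∘ p) :=
  ⟨by simp [hp.1], by simp [hp.2.1], fun i hi =>
    hΦ (hp.mem_Icc hi.le) (hp.mem_Icc hi) (hp.2.2 i hi)⟩

end IsPartition

theorem isPartition_one {a b : ℝ} (hab : a ≤ b) :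
    IsPartition a b 1 (fun k => if k = 0 then a else b) :=
  ⟨rfl, rfl, fun i hi => by simp [Nat.lt_one_iff.1 hi, hab]⟩

/-- The partition `p 0, …, p n` contains every point `q 0, …, q m`. -/
def Refines (n : ℕ) (p : ℕ → ℝ) (m : ℕ) (q : ℕ → ℝ) : Prop := ∀ j ≤ m, ∃ i ≤ n, p i = q j

theorem Refines.trans {n m l : ℕ} {p q r : ℕ → ℝ} (hpq : Refines n p m q) (hqr : Refines m q l r) :
    Refines n p l r := fun k hk =>
  let ⟨j, hj, hqj⟩ := hqr k hk
  let ⟨i, hi, hpi⟩ := hpq j hj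
  ⟨i, hi, hpi.trans hqj⟩

theorem exists_isPartition_of_finset {a b : ℝ} (S : Finset ℝ) (hS : ∀ x ∈ S, x ∈ Icc a b)
    (ha : a ∈ S) (hb : b ∈ S) : ∃ N r, IsPartition a b N r ∧ ∀ x ∈ S, ∃ k ≤ N, r k = x := by
  have hS0 : 0 < S.card := Finset.card_pos.2 ⟨a, ha⟩
  let r : ℕ → ℝ := fun k => if hk : k < S.card then S.orderEmbOfFin rfl ⟨k, hk⟩ else b
  have hr : ∀ k (hk : k < S.card), r k = S.orderEmbOfFin rfl ⟨k, hk⟩ := fun k hk => dif_pos hk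
  refine ⟨S.card - 1, r, ⟨?_, ?_, fun i hi => ?_⟩, fun x hx => ?_⟩
  · rw [hr 0 hS0, Finset.orderEmbOfFin_zero rfl hS0]
    exact le_antisymm (Finset.min'_le S a ha) (hS _ (S.min'_mem _)).1
  · rw [hr _ (by omega), Finset.orderEmbOfFin_last rfl hS0]
    exact le_antisymm (hS _ (S.max'_mem _)).2 (Finset.le_max' S b hb)
  · rw [hr i (by omega), hr (i + 1) (by omega)]
    exact (S.orderEmbOfFin rfl).monotone (Fin.mk_le_mk.2 i.le_succ)
  · rw [← Finset.mem_coe, ← Finset.range_orderEmbOfFin S rfl] at hx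
    obtain ⟨⟨k, hk⟩, rfl⟩ := hx
    exact ⟨k, by omega, hr k hk⟩

theorem exists_refines_of_finset {a b : ℝ} {n : ℕ} {p : ℕ → ℝ} (hp : IsPartition a b n p)
    (T : Finset ℝ) (hT : ∀ x ∈ T, x ∈ Icc a b) :
    ∃ N r, IsPartition a b N r ∧ Refines N r n p ∧ ∀ x ∈ T, ∃ k ≤ N, r k = x := by
  classical
  have hpS : ∀ i ≤ n, p i ∈ T ∪ (Finset.range (n + 1)).image p := fun i hi =>
    Finset.mem_union_right _ (Finset.mem_image_of_mem p (Finset.mem_range.2 (by omega)))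
  obtain ⟨N, r, hr, hrS⟩ := exists_isPartition_of_finset (T ∪ (Finset.range (n + 1)).image p)
    (by
      simp only [Finset.mem_union, Finset.mem_image, Finset.mem_range]
      rintro x (hx | ⟨i, hi, rfl⟩)
      exacts [hT x hx, hp.mem_Icc (by omega)])
    (hp.1 ▸ hpS 0 n.zero_le) (hp.2.1 ▸ hpS n le_rfl)
  exact ⟨N, r, hr, fun i hi => hrS _ (hpS i hi), fun x hx => hrS x (Finset.mem_union_left _ hx)⟩

theorem exists_common_refinement {a b : ℝ} {n m : ℕ} {p q : ℕ → ℝ} (hp : IsPartition a b n p)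
    (hq : IsPartition a b m q) :
    ∃ N r, IsPartition a b N r ∧ Refines N r n p ∧ Refines N r m q := by
  obtain ⟨N, r, hr, hrp, hrq⟩ := exists_refines_of_finset hp ((Finset.range (m + 1)).image q)
    (by
      simp only [Finset.mem_image, Finset.mem_range]
      rintro _ ⟨j, hj, rfl⟩
      exact hq.mem_Icc (by omega))
  exact ⟨N, r, hr, hrp, fun j hj =>
    hrq _ (Finset.mem_image_of_mem q (Finset.mem_range.2 (by omega)))⟩

section DarbouxSums

variable {h G : ℝ → ℝ} {a b : ℝ} {n m : ℕ} {p q : ℕ → ℝ}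

theorem upperSum_neg : upperSum (fun x => -h x) G n p = -lowerSum h G n p := by
  simp only [upperSum, lowerSum, ← Finset.sum_neg_distrib, ← neg_mul]
  refine Finset.sum_congr rfl fun i _ => ?_
  rw [show (fun x => -h x) = Neg.neg ∘ h from rfl, image_comp, image_neg_eq_neg, Real.sSup_neg]

theorem upperSum_sub_lowerSum : upperSum h G n p - lowerSum h G n p =
    ∑ i ∈ Finset.range n, osc h (Icc (p i) (p (i + 1))) * (G (p (i + 1)) - G (p i)) := by
  simp only [upperSum, lowerSum, osc, ← Finset.sum_sub_distrib, sub_mul]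

theorem upperSum_add (k l : ℕ) :
    upperSum h G (k + l) p = upperSum h G k p + upperSum h G l (fun i => p (k + i)) :=
  Finset.sum_range_add _ k l

theorem upperSum_one : upperSum h G 1 p = sSup (h '' Icc (p 0) (p 1)) * (G (p 1) - G (p 0)) := by
  simp [upperSum]

theorem upperSum_le_sSup_mul (hG : MonotoneOn G (Icc a b)) (hh : BddOn h (Icc a b))
    (hp : IsPartition a b n p) : upperSum h G n p ≤ sSup (h '' Icc a b) * (G b - G a) :=
  calc upperSum h G n p
      ≤ ∑ i ∈ Finset.range n, sSup (h '' Icc a b) * (G (p (i + 1)) - G (p i)) := by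
        refine Finset.sum_le_sum fun i hi => ?_
        have hi : i < n := Finset.mem_range.1 hi
        refine mul_le_mul_of_nonneg_right ?_ (hp.sub_nonneg_of_monotoneOn hG hi)
        exact csSup_le_csSup hh.bddAbove_image ((nonempty_Icc.2 (hp.2.2 i hi)).image h)
          (image_mono (hp.Icc_subset hi))
    _ = sSup (h '' Icc a b) * (G b - G a) := by
        rw [← Finset.mul_sum, Finset.sum_range_sub (fun i => G (p i)), hp.1, hp.2.1]

theorem upperSum_le_of_refines (hG : MonotoneOn G (Icc a b)) (hh : BddOn h (Icc a b))
    (hp : IsPartition a b n p) (hq : IsPartition a b m q) (hpq : Refines n p m q) :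
    upperSum h G n p ≤ upperSum h G m q := by
  induction m generalizing a n p q with
  | zero =>
    have hab : a = b := hq.1.symm.trans hq.2.1
    calc upperSum h G n p ≤ sSup (h '' Icc a b) * (G b - G a) := upperSum_le_sSup_mul hG hh hp
      _ = upperSum h G 0 q := by simp [upperSum, hab]
  | succ m ih =>
    -- split both sums at the first interior point `q 1 = p k` of the coarse partition
    obtain ⟨k, hk, hpk⟩ := hpq 1 (by omega)
    obtain ⟨l, rfl⟩ := Nat.exists_eq_add_of_le hk
    have hq' : IsPartition a b (1 + m) q := by rwa [Nat.add_comm]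
    have hsub : Icc (q 1) b ⊆ Icc a b := Icc_subset_Icc (hq.mem_Icc (by omega)).1 le_rfl
    have hfirst : upperSum h G k p ≤ upperSum h G 1 q := by
      rw [upperSum_one, hq.1, ← hpk]
      exact upperSum_le_sSup_mul (hG.mono (Icc_subset_Icc le_rfl (hp.mem_Icc hk).2))
        (hh.mono (Icc_subset_Icc le_rfl (hp.mem_Icc hk).2)) hp.take
    have hrest : upperSum h G l (fun i => p (k + i)) ≤ upperSum h G m (fun j => q (1 + j)) := by
      refine ih (hG.mono hsub) (hh.mono hsub) (hpk ▸ hp.drop) hq'.drop fun j hj => ?_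
      obtain ⟨i, hi, hpi⟩ := hpq (1 + j) (by omega)
      by_cases hki : k ≤ i
      · exact ⟨i - k, by omega, by rwa [Nat.add_sub_cancel' hki]⟩
      · -- `q (1 + j) = p i ≤ p k = q 1 ≤ q (1 + j)`
        refine ⟨0, by omega, le_antisymm ?_ ?_⟩
        · exact hpk ▸ hq.le_of_le (by omega) (by omega)
        · exact hpi ▸ hp.le_of_le (by omega) (by omega)
    rw [upperSum_add, Nat.add_comm m 1, upperSum_add]
    exact add_le_add hfirst hrest

theorem lowerSum_le_of_refines (hG : MonotoneOn G (Icc a b)) (hh : BddOn h (Icc a b))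
    (hp : IsPartition a b n p) (hq : IsPartition a b m q) (hpq : Refines n p m q) :
    lowerSum h G m q ≤ lowerSum h G n p := by
  have := upperSum_le_of_refines hG hh.neg hp hq hpq
  rw [upperSum_neg, upperSum_neg] at this
  linarith

theorem lowerSum_le_upperSum (hG : MonotoneOn G (Icc a b)) (hh : BddOn h (Icc a b))
    (hp : IsPartition a b n p) : lowerSum h G n p ≤ upperSum h G n p := by
  refine Finset.sum_le_sum fun i hi => ?_
  have hi : i < n := Finset.mem_range.1 hi
  have hh' := hh.mono (hp.Icc_subset hi)
  exact mul_le_mul_of_nonneg_right (csInf_le_csSup ((nonempty_Icc.2 (hp.2.2 i hi)).image h)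
    hh'.bddBelow_image hh'.bddAbove_image) (hp.sub_nonneg_of_monotoneOn hG hi)

theorem lowerSum_le_upperSum_of_isPartition (hG : MonotoneOn G (Icc a b))
    (hh : BddOn h (Icc a b)) (hp : IsPartition a b n p) (hq : IsPartition a b m q) :
    lowerSum h G m q ≤ upperSum h G n p := by
  obtain ⟨N, r, hr, hrp, hrq⟩ := exists_common_refinement hp hq
  calc lowerSum h G m q ≤ lowerSum h G N r := lowerSum_le_of_refines hG hh hr hq hrq
    _ ≤ upperSum h G N r := lowerSum_le_upperSum hG hh hr
    _ ≤ upperSum h G n p := upperSum_le_of_refines hG hh hr hp hrp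

end DarbouxSums

section DarbouxIntegral

variable {h G : ℝ → ℝ} {a b v : ℝ}

theorem upperSums_nonempty (hab : a ≤ b) : (upperSums h G a b).Nonempty :=
  ⟨_, 1, _, isPartition_one hab, rfl⟩

theorem lowerSums_nonempty (hab : a ≤ b) : (lowerSums h G a b).Nonempty :=
  ⟨_, 1, _, isPartition_one hab, rfl⟩

theorem bddBelow_upperSums (hab : a ≤ b) (hG : MonotoneOn G (Icc a b)) (hh : BddOn h (Icc a b)) :
    BddBelow (upperSums h G a b) :=
  ⟨_, fun _ ⟨_, _, hp, hu⟩ => hu ▸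
    lowerSum_le_upperSum_of_isPartition hG hh hp (isPartition_one hab)⟩

theorem bddAbove_lowerSums (hab : a ≤ b) (hG : MonotoneOn G (Icc a b)) (hh : BddOn h (Icc a b)) :
    BddAbove (lowerSums h G a b) :=
  ⟨_, fun _ ⟨_, _, hq, hl⟩ => hl ▸
    lowerSum_le_upperSum_of_isPartition hG hh (isPartition_one hab) hq⟩

theorem sSup_lowerSums_le_sInf_upperSums (hab : a ≤ b) (hG : MonotoneOn G (Icc a b))
    (hh : BddOn h (Icc a b)) : sSup (lowerSums h G a b) ≤ sInf (upperSums h G a b) :=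
  csSup_le (lowerSums_nonempty hab) fun _ ⟨_, _, hq, hl⟩ => le_csInf (upperSums_nonempty hab)
    fun _ ⟨_, _, hp, hu⟩ => hl ▸ hu ▸ lowerSum_le_upperSum_of_isPartition hG hh hp hq

theorem sInf_mul_le_dsIntegral (hab : a ≤ b) (hG : MonotoneOn G (Icc a b))
    (hh : BddOn h (Icc a b)) : sInf (h '' Icc a b) * (G b - G a) ≤ DSIntegral h G a b :=
  le_csInf (upperSums_nonempty hab) fun _ ⟨_, _, hp, hu⟩ => hu ▸ by
    simpa [lowerSum] using lowerSum_le_upperSum_of_isPartition hG hh hp (isPartition_one hab)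

theorem dsIntegral_le_sSup_mul (hab : a ≤ b) (hG : MonotoneOn G (Icc a b))
    (hh : BddOn h (Icc a b)) : DSIntegral h G a b ≤ sSup (h '' Icc a b) * (G b - G a) :=
  csInf_le (bddBelow_upperSums hab hG hh) ⟨1, _, isPartition_one hab, by simp [upperSum]⟩

theorem DSIntegrable.exists_isPartition_forall_refines (hint : DSIntegrable h G a b)
    (hab : a ≤ b) (hG : MonotoneOn G (Icc a b)) (hh : BddOn h (Icc a b)) {ε : ℝ} (hε : 0 < ε) :
    ∃ n p, IsPartition a b n p ∧ ∀ N r, IsPartition a b N r → Refines N r n p →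
      upperSum h G N r ≤ DSIntegral h G a b + ε ∧ DSIntegral h G a b - ε ≤ lowerSum h G N r := by
  obtain ⟨_, ⟨n₁, p₁, hp₁, rfl⟩, hU⟩ :=
    exists_lt_of_csInf_lt (upperSums_nonempty hab) (lt_add_of_pos_right (DSIntegral h G a b) hε)
  have hIL : DSIntegral h G a b - ε < sSup (lowerSums h G a b) := by
    rw [← hint]
    exact sub_lt_self _ hε
  obtain ⟨_, ⟨n₂, p₂, hp₂, rfl⟩, hL⟩ := exists_lt_of_lt_csSup (lowerSums_nonempty hab) hIL
  obtain ⟨n, p, hp, hpp₁, hpp₂⟩ := exists_common_refinement hp₁ hp₂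
  exact ⟨n, p, hp, fun N r hr hrp =>
    ⟨(upperSum_le_of_refines hG hh hr hp₁ (hrp.trans hpp₁)).trans hU.le,
      hL.le.trans (lowerSum_le_of_refines hG hh hr hp₂ (hrp.trans hpp₂))⟩⟩

theorem dsIntegrable_and_dsIntegral_eq_of_squeeze (hab : a ≤ b) (hG : MonotoneOn G (Icc a b))
    (hh : BddOn h (Icc a b))
    (H : ∀ ε > 0, ∃ n p, IsPartition a b n p ∧
      upperSum h G n p ≤ v + ε ∧ v - ε ≤ lowerSum h G n p) :
    DSIntegrable h G a b ∧ DSIntegral h G a b = v := by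
  have hU : sInf (upperSums h G a b) ≤ v := le_of_forall_pos_le_add fun ε hε => by
    obtain ⟨n, p, hp, hUp, -⟩ := H ε hε
    exact (csInf_le (bddBelow_upperSums hab hG hh) ⟨n, p, hp, rfl⟩).trans hUp
  have hL : v ≤ sSup (lowerSums h G a b) := le_of_forall_pos_le_add fun ε hε => by
    obtain ⟨n, p, hp, -, hLp⟩ := H ε hε
    linarith [le_csSup (bddAbove_lowerSums hab hG hh) ⟨n, p, hp, rfl⟩]
  have hLU := sSup_lowerSums_le_sInf_upperSums hab hG hh
  exact ⟨le_antisymm (hU.trans hL) hLU, le_antisymm hU (hL.trans hLU)⟩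

end DarbouxIntegral

theorem sSup_mul_dsIntegral_le {f ψ : ℝ → ℝ} {c d M : ℝ} (hcd : c ≤ d)
    (hψ0 : ∀ y ∈ Icc c d, 0 ≤ ψ y) (hψ : BddOn ψ (Icc c d)) (hf : ∀ y ∈ Icc c d, |f y| ≤ M) :
    sSup (f '' Icc c d) * DSIntegral ψ id c d ≤
      sSup ((fun y => f y * ψ y) '' Icc c d) * (d - c) + M * (osc ψ (Icc c d) * (d - c)) := by
  set V := DSIntegral ψ id c d
  have hne : (Icc c d).Nonempty := nonempty_Icc.2 hcd
  have hΔ : 0 ≤ d - c := sub_nonneg.2 hcd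
  have hM : 0 ≤ M := (abs_nonneg _).trans (hf c ⟨le_rfl, hcd⟩)
  have hVl : sInf (ψ '' Icc c d) * (d - c) ≤ V := sInf_mul_le_dsIntegral hcd monotoneOn_id hψ
  have hVu : V ≤ sSup (ψ '' Icc c d) * (d - c) := dsIntegral_le_sSup_mul hcd monotoneOn_id hψ
  have hV : 0 ≤ V := (mul_nonneg (le_csInf (hne.image ψ) (by
    rintro _ ⟨y, hy, rfl⟩
    exact hψ0 y hy)) hΔ).trans hVl
  have hpt : ∀ y ∈ Icc c d, f y * V ≤
      sSup ((fun y => f y * ψ y) '' Icc c d) * (d - c) + M * (osc ψ (Icc c d) * (d - c)) := by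
    intro y hy
    have h₁ := mul_le_mul_of_nonneg_right (csInf_le hψ.bddBelow_image ⟨y, hy, rfl⟩) hΔ
    have h₂ := mul_le_mul_of_nonneg_right (le_csSup hψ.bddAbove_image ⟨y, hy, rfl⟩) hΔ
    have hdev : |V - ψ y * (d - c)| ≤ osc ψ (Icc c d) * (d - c) := by
      rw [abs_le, osc]
      constructor <;> linarith
    have hfψ : f y * ψ y ≤ sSup ((fun y => f y * ψ y) '' Icc c d) :=
      le_csSup ((BddOn.mul ⟨M, hf⟩ hψ).bddAbove_image) ⟨y, hy, rfl⟩
    calc f y * V = f y * ψ y * (d - c) + f y * (V - ψ y * (d - c)) := by ring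
      _ ≤ sSup ((fun y => f y * ψ y) '' Icc c d) * (d - c) + M * (osc ψ (Icc c d) * (d - c)) :=
        add_le_add (mul_le_mul_of_nonneg_right hfψ hΔ) ((le_abs_self _).trans
          ((abs_mul _ _).trans_le (mul_le_mul (hf y hy) hdev (abs_nonneg _) hM)))
  rw [mul_comm, ← smul_eq_mul, ← Real.sSup_smul_of_nonneg hV]
  refine csSup_le (hne.image f).smul_set ?_
  rintro _ ⟨_, ⟨y, hy, rfl⟩, rfl⟩
  exact (mul_comm V (f y)).trans_le (hpt y hy)

section Comparison

variable {f ψ Ψ : ℝ → ℝ} {c d M : ℝ} {n : ℕ} {q : ℕ → ℝ}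

theorem upperSum_le_upperSum_mul_add (hψ0 : ∀ y ∈ Icc c d, 0 ≤ ψ y) (hψ : BddOn ψ (Icc c d))
    (hf : ∀ y ∈ Icc c d, |f y| ≤ M)
    (hΨ : ∀ y₁ ∈ Icc c d, ∀ y₂ ∈ Icc c d, y₁ ≤ y₂ → Ψ y₂ - Ψ y₁ = DSIntegral ψ id y₁ y₂)
    (hq : IsPartition c d n q) :
    upperSum f Ψ n q ≤
      upperSum (fun y => f y * ψ y) id n q + M * (upperSum ψ id n q - lowerSum ψ id n q) := by
  rw [upperSum_sub_lowerSum, Finset.mul_sum]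
  simp only [upperSum, ← Finset.sum_add_distrib]
  refine Finset.sum_le_sum fun i hi => ?_
  have hi : i < n := Finset.mem_range.1 hi
  have hsub := hq.Icc_subset hi
  rw [hΨ _ (hq.mem_Icc hi.le) _ (hq.mem_Icc hi) (hq.2.2 i hi)]
  exact sSup_mul_dsIntegral_le (hq.2.2 i hi) (fun y hy => hψ0 y (hsub hy)) (hψ.mono hsub)
    (fun y hy => hf y (hsub hy))

theorem lowerSum_mul_sub_le_lowerSum (hψ0 : ∀ y ∈ Icc c d, 0 ≤ ψ y) (hψ : BddOn ψ (Icc c d))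
    (hf : ∀ y ∈ Icc c d, |f y| ≤ M)
    (hΨ : ∀ y₁ ∈ Icc c d, ∀ y₂ ∈ Icc c d, y₁ ≤ y₂ → Ψ y₂ - Ψ y₁ = DSIntegral ψ id y₁ y₂)
    (hq : IsPartition c d n q) :
    lowerSum (fun y => f y * ψ y) id n q - M * (upperSum ψ id n q - lowerSum ψ id n q) ≤
      lowerSum f Ψ n q := by
  have := upperSum_le_upperSum_mul_add (f := fun y => -f y) hψ0 hψ
    (fun y hy => (abs_neg (f y)).trans_le (hf y hy)) hΨ hq
  simp only [neg_mul] at this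
  rw [upperSum_neg, upperSum_neg] at this
  linarith

end Comparison

section ChangeOfVariables

variable {h G Φ : ℝ → ℝ} {a b : ℝ} {n m : ℕ} {p q : ℕ → ℝ}

theorem IsPartition.image_Icc (hp : IsPartition a b n p) (hΦc : ContinuousOn Φ (Icc a b))
    (hΦm : MonotoneOn Φ (Icc a b)) {i : ℕ} (hi : i < n) :
    Φ '' Icc (p i) (p (i + 1)) = Icc (Φ (p i)) (Φ (p (i + 1))) :=
  (hΦc.mono (hp.Icc_subset hi)).image_Icc_of_monotoneOn (hp.2.2 i hi) (hΦm.mono (hp.Icc_subset hi))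

theorem upperSum_comp (hΦc : ContinuousOn Φ (Icc a b)) (hΦm : MonotoneOn Φ (Icc a b))
    (hp : IsPartition a b n p) : upperSum (h ∘ Φ) (G ∘ Φ) n p = upperSum h G n (Φ ∘ p) :=
  Finset.sum_congr rfl fun i hi => by
    rw [image_comp, hp.image_Icc hΦc hΦm (Finset.mem_range.1 hi)]
    rfl

theorem lowerSum_comp (hΦc : ContinuousOn Φ (Icc a b)) (hΦm : MonotoneOn Φ (Icc a b))
    (hp : IsPartition a b n p) : lowerSum (h ∘ Φ) (G ∘ Φ) n p = lowerSum h G n (Φ ∘ p) :=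
  Finset.sum_congr rfl fun i hi => by
    rw [image_comp, hp.image_Icc hΦc hΦm (Finset.mem_range.1 hi)]
    rfl

theorem IsPartition.exists_refines_comp (hp : IsPartition a b n p)
    (hΦc : ContinuousOn Φ (Icc a b)) (hq : IsPartition (Φ a) (Φ b) m q) :
    ∃ N r, IsPartition a b N r ∧ Refines N r n p ∧ Refines N (Φ ∘ r) m q := by
  have hΦ : SurjOn Φ (Icc a b) (Icc (Φ a) (Φ b)) := intermediate_value_Icc hp.left_le_right hΦc
  obtain ⟨N, r, hr, hrp, hrT⟩ := exists_refines_of_finset hp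
    ((Finset.range (m + 1)).image (Function.invFunOn Φ (Icc a b) ∘ q)) (by
      simp only [Finset.mem_image, Finset.mem_range]
      rintro _ ⟨j, hj, rfl⟩
      exact hΦ.mapsTo_invFunOn (hq.mem_Icc (by omega)))
  refine ⟨N, r, hr, hrp, fun j hj => ?_⟩
  obtain ⟨k, hk, hrk⟩ :=
    hrT _ (Finset.mem_image_of_mem _ (Finset.mem_range.2 (Nat.lt_succ_of_le hj)))
  exact ⟨k, hk, by rw [Function.comp_apply, hrk]; exact hΦ.rightInvOn_invFunOn (hq.mem_Icc hj)⟩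

end ChangeOfVariables

/-- if `(f∘Φ)(ψ∘Φ)` is integrable with respect to `Φ` and `ψ` is
integrable, then `f∘Φ` is integrable with respect to `Ψ∘Φ` with the same integral. -/
theorem stmt13 (a b : ℝ) (hab : a ≤ b) (Φ ψ Ψ f : ℝ → ℝ) (Mf : ℝ)
    (hΦc : ContinuousOn Φ (Set.Icc a b)) (hΦm : MonotoneOn Φ (Set.Icc a b))
    (hψ0 : ∀ y ∈ Set.Icc (Φ a) (Φ b), 0 ≤ ψ y)
    (hψb : BddOn ψ (Set.Icc (Φ a) (Φ b)))
    (hψi : DSIntegrable ψ id (Φ a) (Φ b))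
    (hΨm : MonotoneOn Ψ (Set.Icc (Φ a) (Φ b)))
    (hΨ : ∀ y₁ ∈ Set.Icc (Φ a) (Φ b), ∀ y₂ ∈ Set.Icc (Φ a) (Φ b), y₁ ≤ y₂ →
      Ψ y₂ - Ψ y₁ = DSIntegral ψ id y₁ y₂)
    (hf : ∀ y ∈ Set.Icc (Φ a) (Φ b), |f y| ≤ Mf)
    (hgi : DSIntegrable (fun x => f (Φ x) * ψ (Φ x)) Φ a b) :
    DSIntegrable (f ∘ Φ) (Ψ ∘ Φ) a b ∧
    DSIntegral (f ∘ Φ) (Ψ ∘ Φ) a b =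
      DSIntegral (fun x => f (Φ x) * ψ (Φ x)) Φ a b := by
  have hΦ : MapsTo Φ (Icc a b) (Icc (Φ a) (Φ b)) := fun x hx =>
    ⟨hΦm (left_mem_Icc.2 hab) hx hx.1, hΦm hx (right_mem_Icc.2 hab) hx.2⟩
  have hΦab : Φ a ≤ Φ b := (hΦ (left_mem_Icc.2 hab)).2
  have hMf : 0 ≤ Mf := (abs_nonneg _).trans (hf _ ⟨le_rfl, hΦab⟩)
  have hfb : BddOn f (Icc (Φ a) (Φ b)) := ⟨Mf, hf⟩
  refine dsIntegrable_and_dsIntegral_eq_of_squeeze hab (hΨm.comp hΦm hΦ) (hfb.comp hΦ)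
    fun ε hε => ?_
  obtain ⟨n, p, hp, hgp⟩ := hgi.exists_isPartition_forall_refines hab hΦm
    ((hfb.mul hψb).comp hΦ) (half_pos hε)
  obtain ⟨δ, hδ, hMδ⟩ := exists_pos_mul_lt (half_pos hε) (2 * Mf)
  obtain ⟨m, q, hq, hψq⟩ := hψi.exists_isPartition_forall_refines hΦab monotoneOn_id hψb hδ
  obtain ⟨N, r, hr, hrp, hrq⟩ := hp.exists_refines_comp hΦc hq
  obtain ⟨hgU, hgL⟩ := hgp N r hr hrp
  obtain ⟨hψU, hψL⟩ := hψq N (Φ ∘ r) (hr.comp hΦm) hrq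
  have hosc : Mf * (upperSum ψ id N (Φ ∘ r) - lowerSum ψ id N (Φ ∘ r)) ≤ ε / 2 :=
    calc _ ≤ Mf * (2 * δ) := mul_le_mul_of_nonneg_left (by linarith) hMf
      _ ≤ ε / 2 := by linarith
  refine ⟨N, r, hr, ?_, ?_⟩
  · have hg : upperSum (fun x => f (Φ x) * ψ (Φ x)) Φ N r =
        upperSum (fun y => f y * ψ y) id N (Φ ∘ r) :=
      upperSum_comp (h := fun y => f y * ψ y) (G := id) hΦc hΦm hr
    rw [upperSum_comp hΦc hΦm hr]
    linarith [upperSum_le_upperSum_mul_add hψ0 hψb hf hΨ (hr.comp hΦm)]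
  · have hg : lowerSum (fun x => f (Φ x) * ψ (Φ x)) Φ N r =
        lowerSum (fun y => f y * ψ y) id N (Φ ∘ r) :=
      lowerSum_comp (h := fun y => f y * ψ y) (G := id) hΦc hΦm hr
    rw [lowerSum_comp hΦc hΦm hr]
    linarith [lowerSum_mul_sub_le_lowerSum hψ0 hψb hf hΨ (hr.comp hΦm)]
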